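/- arXiv:2402.15912 — 3 statements merged into one kernel-verified Lean document; each statement's English description precedes it below -/
import Mathlib

section
/- (Lemma 2) Let ρ_SA be a bipartite density matrix on ℂ^{d_S} ⊗ ℂ^{d_A} and let {|r_k⟩} be a fixed orthonormal basis of ℂ^{d_S}. If for every orthonormal basis {|a⟩} of ℂ^{d_A} and every outcome a with p_a > 0 the conditional state ρ_{S|a} is diagonal with respect to the basis {|r_k⟩}, then ρ_SA = Σ_k |r_k⟩⟨r_k| ⊗ C^A_k, where each C^A_k is a positive semidefinite matrix on ℂ^{d_A}. -/
open Matrix BigOperators Finset Kronecker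
open scoped ComplexOrder

noncomputable section

namespace Daemonic

/-- The outer product `|x⟩⟨y|` as a matrix. -/
def ketbra {ι : Type*} [Fintype ι] (x y : ι → ℂ) : Matrix ι ι ℂ :=
  Matrix.vecMulVec x (star y)

/-- A family of vectors is orthonormal. -/
def ONFam {ι κ : Type*} [Fintype ι] [DecidableEq κ] (v : κ → ι → ℂ) : Prop :=
  ∀ i j, star (v i) ⬝ᵥ v j = if i = j then 1 else 0

/-- A density matrix: positive semidefinite with unit trace. -/
def IsDensity {ι : Type*} [Fintype ι] (ρ : Matrix ι ι ℂ) : Prop :=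
  ρ.PosSemidef ∧ ρ.trace = 1

/-- The matrix element `⟨x|M|y⟩`. -/
def matElem {ι : Type*} [Fintype ι] (M : Matrix ι ι ℂ) (x y : ι → ℂ) : ℂ :=
  star x ⬝ᵥ (M *ᵥ y)

/-- The Hamiltonian `H_S = ∑ₖ εₖ |εₖ⟩⟨εₖ|`. -/
def ham {n : ℕ} (ε : Fin n → ℝ) (v : Fin n → Fin n → ℂ) : Matrix (Fin n) (Fin n) ℂ :=
  ∑ k, (ε k : ℂ) • ketbra (v k) (v k)

/-- `e^{t H_S} = ∑ₖ e^{t εₖ} |εₖ⟩⟨εₖ|` (functional calculus in the eigenbasis of `H_S`). -/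
def expHam {n : ℕ} (ε : Fin n → ℝ) (v : Fin n → Fin n → ℂ) (t : ℝ) :
    Matrix (Fin n) (Fin n) ℂ :=
  ∑ k, (Real.exp (t * ε k) : ℂ) • ketbra (v k) (v k)

/-- The expected utility `⟨u(w)⟩_{ρ,U}` for quasiprobability parameter `q`,
with respect to the eigenvalues `ε` and orthonormal eigenvectors `v` of `H_S`. -/
def expUtil {n : ℕ} (u : ℝ → ℝ) (q : ℝ) (ε : Fin n → ℝ) (v : Fin n → Fin n → ℂ)
    (ρ U : Matrix (Fin n) (Fin n) ℂ) : ℝ :=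
  ∑ i, ∑ j, ∑ k,
    (matElem ρ (v i) (v j) * matElem Uᴴ (v j) (v k) * matElem U (v k) (v i)).re *
      u (q * ε i + (1 - q) * ε j - ε k)

/-- The optimal expected utility `𝓤(ρ) = max over unitaries U of ⟨u(w)⟩_{ρ,U}`. -/
def optUtil {n : ℕ} (u : ℝ → ℝ) (q : ℝ) (ε : Fin n → ℝ) (v : Fin n → Fin n → ℂ)
    (ρ : Matrix (Fin n) (Fin n) ℂ) : ℝ :=
  ⨆ U : Matrix.unitaryGroup (Fin n) ℂ, expUtil u q ε v ρ (U : Matrix (Fin n) (Fin n) ℂ)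

/-- The exponential utility `u(w) = (1 - e^{-r w})/r`. -/
def expUtility (r : ℝ) : ℝ → ℝ := fun w => (1 - Real.exp (-r * w)) / r

/-- The partial trace over the ancilla. -/
def ptraceA {dS dA : ℕ} (ρSA : Matrix (Fin dS × Fin dA) (Fin dS × Fin dA) ℂ) :
    Matrix (Fin dS) (Fin dS) ℂ :=
  Matrix.of fun i j => ∑ a, ρSA (i, a) (j, a)

/-- The unnormalized conditional state `Tr_A((I ⊗ Π_a) ρ_SA (I ⊗ Π_a))`, where
`Π_a = |a⟩⟨a|` projects onto the vector `w a` of an orthonormal basis `w` of the ancilla. -/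
def condUnnorm {dS dA : ℕ} (w : Fin dA → Fin dA → ℂ)
    (ρSA : Matrix (Fin dS × Fin dA) (Fin dS × Fin dA) ℂ) (a : Fin dA) :
    Matrix (Fin dS) (Fin dS) ℂ :=
  Matrix.of fun i j => ∑ c, ∑ d, ρSA (i, c) (j, d) * (w a d * star (w a c))

/-- The outcome probability `p_a = Tr((I ⊗ Π_a) ρ_SA)`. -/
def prob {dS dA : ℕ} (w : Fin dA → Fin dA → ℂ)
    (ρSA : Matrix (Fin dS × Fin dA) (Fin dS × Fin dA) ℂ) (a : Fin dA) : ℝ :=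
  ((condUnnorm w ρSA a).trace).re

/-- The conditional state `ρ_{S|a}`. -/
def condState {dS dA : ℕ} (w : Fin dA → Fin dA → ℂ)
    (ρSA : Matrix (Fin dS × Fin dA) (Fin dS × Fin dA) ℂ) (a : Fin dA) :
    Matrix (Fin dS) (Fin dS) ℂ :=
  ((prob w ρSA a : ℂ))⁻¹ • condUnnorm w ρSA a

/-- The daemonic expected utility `𝓤_{{Π_a}}(ρ_SA) = ∑_a p_a 𝓤(ρ_{S|a})`. -/
def daemonicUtil {dS dA : ℕ} (u : ℝ → ℝ) (q : ℝ) (ε : Fin dS → ℝ)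
    (v : Fin dS → Fin dS → ℂ) (w : Fin dA → Fin dA → ℂ)
    (ρSA : Matrix (Fin dS × Fin dA) (Fin dS × Fin dA) ℂ) : ℝ :=
  ∑ a, prob w ρSA a * optUtil u q ε v (condState w ρSA a)

/-- The maximum daemonic gain `δ𝓤(ρ_SA)`, maximizing over all orthonormal bases of the
ancilla (equivalently, over the rows of all unitary matrices). -/
def daemonicGain {dS dA : ℕ} (u : ℝ → ℝ) (q : ℝ) (ε : Fin dS → ℝ)
    (v : Fin dS → Fin dS → ℂ)
    (ρSA : Matrix (Fin dS × Fin dA) (Fin dS × Fin dA) ℂ) : ℝ :=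
  (⨆ V : Matrix.unitaryGroup (Fin dA) ℂ,
      daemonicUtil u q ε v (fun a => (V : Matrix (Fin dA) (Fin dA) ℂ) a) ρSA) -
    optUtil u q ε v (ptraceA ρSA)

/-- The ergotropy of a (possibly unnormalized) state `σ` with respect to a Hamiltonian `H`:
`ℰ_H(σ) = max over unitaries U of (Tr(Hσ) - Tr(H U σ U†))`. -/
def ergotropyH {n : ℕ} (H σ : Matrix (Fin n) (Fin n) ℂ) : ℝ :=
  ⨆ U : Matrix.unitaryGroup (Fin n) ℂ,
    ((H * σ).trace -
      (H * ((U : Matrix (Fin n) (Fin n) ℂ) * σ * (U : Matrix (Fin n) (Fin n) ℂ)ᴴ)).trace).re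

/-- A separable bipartite state: a convex combination of product states. -/
def IsSeparable {dS dA : ℕ} (ρSA : Matrix (Fin dS × Fin dA) (Fin dS × Fin dA) ℂ) : Prop :=
  ∃ (m : ℕ) (p : Fin m → ℝ) (σ : Fin m → Matrix (Fin dS) (Fin dS) ℂ)
    (τ : Fin m → Matrix (Fin dA) (Fin dA) ℂ),
    (∀ k, 0 ≤ p k) ∧ (∑ k, p k = 1) ∧ (∀ k, IsDensity (σ k)) ∧ (∀ k, IsDensity (τ k)) ∧
    ρSA = ∑ k, (p k : ℂ) • (σ k ⊗ₖ τ k)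

/-- A classical-quantum state `ρ_SA = ∑ₖ pₖ Pₖ ⊗ ρᴬₖ` with `Pₖ` mutually orthogonal
rank-one projectors summing to the identity. -/
def IsClassicalQuantum {dS dA : ℕ}
    (ρSA : Matrix (Fin dS × Fin dA) (Fin dS × Fin dA) ℂ) : Prop :=
  ∃ (p : Fin dS → ℝ) (ψ : Fin dS → Fin dS → ℂ) (τ : Fin dS → Matrix (Fin dA) (Fin dA) ℂ),
    (∀ k, 0 ≤ p k) ∧ (∑ k, p k = 1) ∧ ONFam ψ ∧ (∀ k, IsDensity (τ k)) ∧
    ρSA = ∑ k, (p k : ℂ) • (ketbra (ψ k) (ψ k) ⊗ₖ τ k)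

/-- The dephasing map associated with an orthonormal basis `v`. -/
def dephase {n : ℕ} (v : Fin n → Fin n → ℂ) (ρ : Matrix (Fin n) (Fin n) ℂ) :
    Matrix (Fin n) (Fin n) ℂ :=
  ∑ k, ketbra (v k) (v k) * ρ * ketbra (v k) (v k)

/-! For vectors `x, y` of the system, let `⟨x|ρ|y⟩` (`partialMatElem`) be the operator on the
ancilla obtained by sandwiching `ρ` between the isometries `u ↦ x ⊗ u` and `u ↦ y ⊗ u`. The
matrix element `⟨x|ρ_a|y⟩` of the unnormalised conditional state for the outcome `|a⟩` is
`⟨a|⟨x|ρ|y⟩|a⟩`. By hypothesis it vanishes for `x = r_k`, `y = r_l`, `k ≠ l` when `p_a > 0`, and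
also when `p_a = 0`, since `ρ_a` is then positive semidefinite of trace zero. Every unit vector of
the ancilla belongs to some orthonormal basis, so the quadratic form of `⟨r_k|ρ|r_l⟩` vanishes
identically, hence (over `ℂ`) so does the operator. Expanding `ρ` in the basis `r_k` leaves only
the blocks `C_k = ⟨r_k|ρ|r_k⟩`, which are compressions of `ρ` and hence positive semidefinite. -/

open WithLp (toLp ofLp)

def tensorRight (ι : Type*) [DecidableEq ι] {κ : Type*} (u : κ → ℂ) : Matrix (ι × κ) ι ℂ :=
  of fun p i => if p.1 = i then u p.2 else 0

def tensorLeft {ι : Type*} (κ : Type*) [DecidableEq κ] (x : ι → ℂ) : Matrix (ι × κ) κ ℂ :=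
  of fun p c => if p.2 = c then x p.1 else 0

lemma tensorRight_mulVec {ι κ : Type*} [Fintype ι] [DecidableEq ι] (u : κ → ℂ) (x : ι → ℂ) :
    tensorRight ι u *ᵥ x = fun p => x p.1 * u p.2 := by
  ext p
  simp [tensorRight, mulVec, dotProduct, mul_comm]

lemma tensorLeft_mulVec {ι κ : Type*} [Fintype κ] [DecidableEq κ] (x : ι → ℂ) (u : κ → ℂ) :
    tensorLeft κ x *ᵥ u = fun p => x p.1 * u p.2 := by
  ext p
  simp [tensorLeft, mulVec, dotProduct]

lemma tensorLeft_mul_mul_conjTranspose {ι κ : Type*} [Fintype ι] [Fintype κ] [DecidableEq κ]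
    (x y : ι → ℂ) (M : Matrix κ κ ℂ) :
    tensorLeft κ x * M * (tensorLeft κ y)ᴴ = ketbra x y ⊗ₖ M := by
  ext ⟨i, a⟩ ⟨j, b⟩
  simp only [tensorLeft, Matrix.mul_apply, of_apply, ite_mul, zero_mul, sum_ite_eq, mem_univ,
    ↓reduceIte, conjTranspose_apply, RCLike.star_def, apply_ite (starRingEnd ℂ), map_zero, mul_ite,
    mul_zero, ketbra, kroneckerMap_apply, vecMulVec_apply, Pi.star_apply]
  ring

def partialMatElem {ι κ : Type*} [Fintype ι] [Fintype κ] [DecidableEq κ]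
    (ρ : Matrix (ι × κ) (ι × κ) ℂ) (x y : ι → ℂ) : Matrix κ κ ℂ :=
  (tensorLeft κ x)ᴴ * ρ * tensorLeft κ y

lemma matElem_conjTranspose_mul_mul {m n : Type*} [Fintype m] [Fintype n]
    (A B : Matrix m n ℂ) (ρ : Matrix m m ℂ) (x y : n → ℂ) :
    matElem (Aᴴ * ρ * B) x y = matElem ρ (A *ᵥ x) (B *ᵥ y) := by
  simp only [matElem, ← mulVec_mulVec, dotProduct_mulVec, star_mulVec]

lemma matElem_smul_smul {n : Type*} [Fintype n] (M : Matrix n n ℂ) (c : ℂ) (u : n → ℂ) :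
    matElem M (c • u) (c • u) = star c * c * matElem M u u := by
  simp only [matElem, star_smul, mulVec_smul, dotProduct_smul, smul_dotProduct, smul_eq_mul]
  ring

lemma eq_zero_of_forall_matElem_self_eq_zero {n : Type*} [Fintype n] [DecidableEq n]
    {M : Matrix n n ℂ} (h : ∀ u, matElem M u u = 0) : M = 0 := by
  have hT : toLpLin 2 2 M = 0 := by
    refine (inner_map_self_eq_zero _).mp fun x => ?_
    rw [EuclideanSpace.inner_eq_star_dotProduct, toLpLin_apply, WithLp.ofLp_toLp, dotProduct_star,
      dotProduct_comm]
    exact (congrArg star (h (ofLp x))).trans (star_zero _)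
  simpa using hT

lemma ONFam.sum_ketbra_self {ι : Type*} [Fintype ι] [DecidableEq ι] {v : ι → ι → ℂ}
    (hv : ONFam v) : ∑ k, ketbra (v k) (v k) = 1 := by
  let R : Matrix ι ι ℂ := of fun k s => star (v k s)
  have hR : R * Rᴴ = 1 := by
    ext i j
    simpa [R, Matrix.mul_apply, dotProduct, one_apply] using hv i j
  have hR' : Rᴴ * R = 1 := mul_eq_one_comm.mp hR
  ext s t
  simpa [R, Matrix.mul_apply, ketbra, Matrix.sum_apply, vecMulVec_apply] using
    congrFun (congrFun hR' s) t

lemma sum_tensorLeft_mul_conjTranspose {ι κ : Type*} [Fintype ι] [DecidableEq ι] [Fintype κ]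
    [DecidableEq κ] {v : ι → ι → ℂ} (hv : ONFam v) :
    ∑ k, tensorLeft κ (v k) * (tensorLeft κ (v k))ᴴ = 1 := by
  calc ∑ k, tensorLeft κ (v k) * (tensorLeft κ (v k))ᴴ
      = ∑ k, ketbra (v k) (v k) ⊗ₖ (1 : Matrix κ κ ℂ) :=
        Finset.sum_congr rfl fun k _ => by
          simpa using tensorLeft_mul_mul_conjTranspose (v k) (v k) (1 : Matrix κ κ ℂ)
    _ = (∑ k, ketbra (v k) (v k)) ⊗ₖ (1 : Matrix κ κ ℂ) :=
        (map_sum (AddMonoidHom.mk' (· ⊗ₖ (1 : Matrix κ κ ℂ)) fun A B => add_kronecker A B 1)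
          _ _).symm
    _ = 1 := by rw [hv.sum_ketbra_self, one_kronecker_one]

lemma eq_sum_kronecker_partialMatElem {ι κ : Type*} [Fintype ι] [DecidableEq ι] [Fintype κ]
    [DecidableEq κ] {v : ι → ι → ℂ} (hv : ONFam v) (ρ : Matrix (ι × κ) (ι × κ) ℂ) :
    ρ = ∑ k, ∑ l, ketbra (v k) (v l) ⊗ₖ partialMatElem ρ (v k) (v l) := by
  calc ρ = (∑ k, tensorLeft κ (v k) * (tensorLeft κ (v k))ᴴ) * ρ *
        ∑ l, tensorLeft κ (v l) * (tensorLeft κ (v l))ᴴ := by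
        rw [sum_tensorLeft_mul_conjTranspose hv, Matrix.one_mul, Matrix.mul_one]
    _ = _ := by
        simp only [Finset.sum_mul, Finset.mul_sum, partialMatElem,
          ← tensorLeft_mul_mul_conjTranspose, Matrix.mul_assoc]
        exact Finset.sum_comm

lemma exists_onFam_smul_eq {n : ℕ} {u : Fin n → ℂ} (hu : u ≠ 0) :
    ∃ w : Fin n → Fin n → ℂ, ONFam w ∧ ∃ a, ∃ c : ℂ, u = c • w a := by
  obtain ⟨a, -⟩ := Function.ne_iff.mp hu
  have hu' : toLp 2 u ≠ 0 := by simpa using hu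
  have he : Orthonormal ℂ (({a} : Set (Fin n)).domRestrict
      fun _ => (‖toLp 2 u‖⁻¹ : ℂ) • toLp 2 u) := by
    rw [orthonormal_subsingleton_iff]
    exact fun _ => norm_smul_inv_norm hu'
  obtain ⟨b, hb⟩ := he.exists_orthonormalBasis_extension_of_card_eq (by simp)
  refine ⟨fun i => ofLp (b i), fun i j => ?_, a, ‖toLp 2 u‖, ?_⟩
  · simpa [EuclideanSpace.inner_eq_star_dotProduct, dotProduct_comm] using
      orthonormal_iff_ite.mp b.orthonormal i j
  · dsimp only
    rw [hb a rfl, WithLp.ofLp_smul, smul_smul, mul_inv_cancel₀ (by simpa using hu'), one_smul,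
      WithLp.ofLp_toLp]

section Conditional

variable {dS dA : ℕ} (w : Fin dA → Fin dA → ℂ)

lemma condUnnorm_eq_conjTranspose_mul_mul (ρ : Matrix (Fin dS × Fin dA) (Fin dS × Fin dA) ℂ)
    (a : Fin dA) :
    condUnnorm w ρ a = (tensorRight (Fin dS) (w a))ᴴ * ρ * tensorRight (Fin dS) (w a) := by
  ext i j
  simp only [condUnnorm, RCLike.star_def, of_apply, tensorRight, Matrix.mul_apply,
    conjTranspose_apply, apply_ite (starRingEnd ℂ), map_zero, ite_mul, zero_mul,
    Fintype.sum_prod_type, sum_ite_irrel, sum_const_zero, sum_ite_eq', mem_univ, ↓reduceIte,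
    mul_ite, sum_mul, mul_zero]
  rw [Finset.sum_comm]
  exact Finset.sum_congr rfl fun c _ => Finset.sum_congr rfl fun d _ => by ring

lemma matElem_condUnnorm (ρ : Matrix (Fin dS × Fin dA) (Fin dS × Fin dA) ℂ) (a : Fin dA)
    (x y : Fin dS → ℂ) :
    matElem (condUnnorm w ρ a) x y = matElem (partialMatElem ρ x y) (w a) (w a) := by
  rw [condUnnorm_eq_conjTranspose_mul_mul, partialMatElem, matElem_conjTranspose_mul_mul,
    matElem_conjTranspose_mul_mul, tensorRight_mulVec, tensorRight_mulVec, tensorLeft_mulVec,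
    tensorLeft_mulVec]

variable {ρ : Matrix (Fin dS × Fin dA) (Fin dS × Fin dA) ℂ}

lemma posSemidef_condUnnorm (hρ : ρ.PosSemidef) (a : Fin dA) : (condUnnorm w ρ a).PosSemidef := by
  rw [condUnnorm_eq_conjTranspose_mul_mul]
  exact hρ.conjTranspose_mul_mul_same _

lemma prob_nonneg (hρ : ρ.PosSemidef) (a : Fin dA) : 0 ≤ prob w ρ a :=
  (Complex.nonneg_iff.mp (posSemidef_condUnnorm w hρ a).trace_nonneg).1

lemma condUnnorm_eq_prob_smul_condState (hρ : ρ.PosSemidef) (a : Fin dA) :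
    condUnnorm w ρ a = (prob w ρ a : ℂ) • condState w ρ a := by
  have hpsd := posSemidef_condUnnorm w hρ a
  rcases (prob_nonneg w hρ a).eq_or_lt with h0 | hpos
  · rw [← h0, Complex.ofReal_zero, zero_smul, ← hpsd.trace_eq_zero_iff]
    exact Complex.ext h0.symm (Complex.nonneg_iff.mp hpsd.trace_nonneg).2.symm
  · rw [condState, smul_smul, mul_inv_cancel₀ (by exact_mod_cast hpos.ne'), one_smul]

end Conditional

lemma partialMatElem_eq_zero_of_forall_matElem_condUnnorm {dS dA : ℕ}
    {ρ : Matrix (Fin dS × Fin dA) (Fin dS × Fin dA) ℂ} {x y : Fin dS → ℂ}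
    (h : ∀ w, ONFam w → ∀ a, matElem (condUnnorm w ρ a) x y = 0) : partialMatElem ρ x y = 0 := by
  refine eq_zero_of_forall_matElem_self_eq_zero fun u => ?_
  rcases eq_or_ne u 0 with rfl | hu
  · simp [matElem]
  obtain ⟨w, hw, a, c, rfl⟩ := exists_onFam_smul_eq hu
  rw [matElem_smul_smul, ← matElem_condUnnorm, h w hw a, mul_zero]

/-- Lemma 2: if all conditional states are diagonal with respect to a fixed
orthonormal basis `{|r_k⟩}` for every measurement basis of the ancilla, then
`ρ_SA = ∑ₖ |r_k⟩⟨r_k| ⊗ C^A_k` with `C^A_k` positive semidefinite. -/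
theorem stmt2 {dS dA : ℕ}
    (ρSA : Matrix (Fin dS × Fin dA) (Fin dS × Fin dA) ℂ) (hρSA : IsDensity ρSA)
    (rk : Fin dS → Fin dS → ℂ) (hrk : ONFam rk)
    (hdiag : ∀ w : Fin dA → Fin dA → ℂ, ONFam w → ∀ a : Fin dA, 0 < prob w ρSA a →
      ∀ i j : Fin dS, i ≠ j → matElem (condState w ρSA a) (rk i) (rk j) = 0) :
    ∃ C : Fin dS → Matrix (Fin dA) (Fin dA) ℂ,
      (∀ k, (C k).PosSemidef) ∧
      ρSA = ∑ k, ketbra (rk k) (rk k) ⊗ₖ C k := by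
  have hoff : ∀ k l, k ≠ l → partialMatElem ρSA (rk k) (rk l) = 0 := fun k l hkl =>
    partialMatElem_eq_zero_of_forall_matElem_condUnnorm fun w hw a => by
      rw [condUnnorm_eq_prob_smul_condState w hρSA.1, matElem, smul_mulVec, dotProduct_smul,
        smul_eq_mul, ← matElem]
      rcases (prob_nonneg w hρSA.1 a).eq_or_lt with h0 | hpos
      · rw [← h0, Complex.ofReal_zero, zero_mul]
      · rw [hdiag w hw a hpos k l hkl, mul_zero]
  refine ⟨fun k => partialMatElem ρSA (rk k) (rk k),
    fun k => hρSA.1.conjTranspose_mul_mul_same _, ?_⟩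
  conv_lhs => rw [eq_sum_kronecker_partialMatElem hrk ρSA]
  refine Finset.sum_congr rfl fun k _ => Finset.sum_eq_single k ?_ (by simp)
  intro l _ hlk
  rw [hoff k l hlk.symm, kronecker_zero]

end Daemonic
end
end

section
/- For any utility function u : ℝ → ℝ, any parameter q ∈ ℝ, any bipartite density matrix ρ_SA on ℂ^{d_S} ⊗ ℂ^{d_A} and any orthonormal basis {|a⟩} of ℂ^{d_A}, the daemonic expected utility dominates the optimal expected utility of the reduced state: 𝓤_{{Π_a}}(ρ_SA) ≥ 𝓤(ρ_S) where ρ_S = Tr_A(ρ_SA); consequently the maximum daemonic gain satisfies δ𝓤(ρ_SA) ≥ 0. -/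
open Matrix BigOperators Finset Kronecker
open scoped ComplexOrder

noncomputable section

namespace Daemonic

/-! If `ρ_SA ≥ 0`, every unnormalised conditional state `σ_a` is positive, so positive
homogeneity of `𝓤` gives `p_a 𝓤(ρ_{S|a}) = 𝓤(σ_a)` (also when `p_a = 0`, since then
`σ_a = 0`). The expected utility is linear in the state and `∑_a σ_a = ρ_S` for every
orthonormal basis of the ancilla, so `𝓤(ρ_S)`, a maximum of a sum, is at most `∑_a 𝓤(σ_a)`.
Compactness of the unitary group keeps all these suprema finite; for `δ𝓤` it also bounds the
daemonic utility uniformly in the basis, so the supremum over bases dominates its value at the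
standard basis. -/

section UnitaryGroup

variable {n : Type*} [Fintype n] [DecidableEq n]

theorem isCompact_unitaryGroup {𝕜 : Type*} [RCLike 𝕜] :
    IsCompact (Matrix.unitaryGroup n 𝕜 : Set (Matrix n n 𝕜)) := by
  have hbox : IsCompact (Set.univ.pi fun _ : n => Set.univ.pi fun _ : n =>
      Metric.closedBall (0 : 𝕜) 1) :=
    isCompact_univ_pi fun _ => isCompact_univ_pi fun _ => isCompact_closedBall 0 1
  refine hbox.of_isClosed_subset (isClosed_unitary (R := Matrix n n 𝕜)) fun U hU i _ j _ => ?_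
  simpa using entry_norm_bound_of_unitary hU i j

instance {𝕜 : Type*} [RCLike 𝕜] : CompactSpace (Matrix.unitaryGroup n 𝕜) :=
  isCompact_iff_compactSpace.mp isCompact_unitaryGroup

theorem onFam_rows_one : ONFam fun a => (1 : Matrix n n ℂ) a := by
  intro i j
  simp [dotProduct, Matrix.one_apply, apply_ite, eq_comm]

theorem ONFam.conjTranspose_mul_self {w : n → n → ℂ} (hw : ONFam w) :
    (Matrix.of w)ᴴ * Matrix.of w = 1 := by
  refine mul_eq_one_comm.mp (Matrix.ext fun a b => ?_)
  simpa [Matrix.mul_apply, Matrix.one_apply, dotProduct, mul_comm, eq_comm] using hw b a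

end UnitaryGroup

section ExpUtil

variable {n : ℕ} (u : ℝ → ℝ) (q : ℝ) (ε : Fin n → ℝ) (v : Fin n → Fin n → ℂ)

theorem expUtil_add (ρ σ U : Matrix (Fin n) (Fin n) ℂ) :
    expUtil u q ε v (ρ + σ) U = expUtil u q ε v ρ U + expUtil u q ε v σ U := by
  simp only [expUtil, matElem, Matrix.add_mulVec, dotProduct_add, add_mul, Complex.add_re,
    ← Finset.sum_add_distrib]

theorem expUtil_sum {ι : Type*} (s : Finset ι) (M : ι → Matrix (Fin n) (Fin n) ℂ)
    (U : Matrix (Fin n) (Fin n) ℂ) :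
    expUtil u q ε v (∑ a ∈ s, M a) U = ∑ a ∈ s, expUtil u q ε v (M a) U :=
  map_sum (AddMonoidHom.mk' (expUtil u q ε v · U) (expUtil_add u q ε v · · U)) M s

theorem expUtil_real_smul (r : ℝ) (ρ U : Matrix (Fin n) (Fin n) ℂ) :
    expUtil u q ε v ((r : ℂ) • ρ) U = r * expUtil u q ε v ρ U := by
  simp only [expUtil, matElem, Matrix.smul_mulVec, dotProduct_smul, smul_eq_mul,
    mul_assoc, Complex.re_ofReal_mul, Finset.mul_sum]

theorem continuous_expUtil {X : Type*} [TopologicalSpace X]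
    {ρ U : X → Matrix (Fin n) (Fin n) ℂ} (hρ : Continuous ρ) (hU : Continuous U) :
    Continuous fun x => expUtil u q ε v (ρ x) (U x) := by
  unfold expUtil matElem
  fun_prop

theorem optUtil_real_smul {r : ℝ} (hr : 0 ≤ r) (ρ : Matrix (Fin n) (Fin n) ℂ) :
    optUtil u q ε v ((r : ℂ) • ρ) = r * optUtil u q ε v ρ := by
  simp only [optUtil, expUtil_real_smul, Real.mul_iSup_of_nonneg hr]

theorem bddAbove_range_expUtil (ρ : Matrix (Fin n) (Fin n) ℂ) :
    BddAbove (Set.range fun U : Matrix.unitaryGroup (Fin n) ℂ => expUtil u q ε v ρ U) :=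
  (isCompact_range (continuous_expUtil u q ε v continuous_const continuous_subtype_val)).bddAbove

theorem expUtil_le_optUtil (ρ : Matrix (Fin n) (Fin n) ℂ) (U : Matrix.unitaryGroup (Fin n) ℂ) :
    expUtil u q ε v ρ U ≤ optUtil u q ε v ρ :=
  le_ciSup (bddAbove_range_expUtil u q ε v ρ) U

theorem optUtil_sum_le {ι : Type*} (s : Finset ι) (M : ι → Matrix (Fin n) (Fin n) ℂ) :
    optUtil u q ε v (∑ a ∈ s, M a) ≤ ∑ a ∈ s, optUtil u q ε v (M a) :=
  ciSup_le fun U => (expUtil_sum u q ε v s M U).trans_le <|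
    Finset.sum_le_sum fun a _ => expUtil_le_optUtil u q ε v (M a) U

end ExpUtil

theorem _root_.Matrix.PosSemidef.trace_re_smul_inv_smul {ι : Type*} [Fintype ι]
    {A : Matrix ι ι ℂ} (hA : A.PosSemidef) :
    (A.trace.re : ℂ) • ((A.trace.re : ℂ)⁻¹ • A) = A := by
  by_cases h : A.trace = 0
  · simp [hA.trace_eq_zero_iff.mp h]
  · have htr : (A.trace.re : ℂ) = A.trace :=
      Complex.ext rfl (Complex.nonneg_iff.mp hA.trace_nonneg).2
    rw [htr, smul_inv_smul₀ h]

section Conditioning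

variable {dS dA : ℕ} (w : Fin dA → Fin dA → ℂ)
  (ρSA : Matrix (Fin dS × Fin dA) (Fin dS × Fin dA) ℂ)

theorem condUnnorm_eq_mul_mul_conjTranspose (a : Fin dA) :
    condUnnorm w ρSA a =
      (Matrix.of fun i (jc : Fin dS × Fin dA) => if jc.1 = i then star (w a jc.2) else 0) * ρSA *
      (Matrix.of fun i (jc : Fin dS × Fin dA) => if jc.1 = i then star (w a jc.2) else 0)ᴴ := by
  ext i j
  simp only [condUnnorm, RCLike.star_def, of_apply, Matrix.mul_apply, ite_mul, zero_mul,
    Fintype.sum_prod_type, sum_ite_irrel, sum_const_zero, sum_ite_eq', mem_univ, ↓reduceIte,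
    conjTranspose_apply, apply_ite (starRingEnd ℂ), RingHomCompTriple.comp_apply,
    RingHom.id_apply, map_zero, mul_ite, sum_mul, mul_zero]
  rw [Finset.sum_comm]
  refine Finset.sum_congr rfl fun c _ => Finset.sum_congr rfl fun d _ => ?_
  ring

theorem continuous_condUnnorm (a : Fin dA) :
    Continuous fun w : Fin dA → Fin dA → ℂ => condUnnorm w ρSA a := by
  refine continuous_pi fun i => continuous_pi fun j => ?_
  simp only [condUnnorm, Matrix.of_apply]
  fun_prop

variable {w ρSA}

theorem condUnnorm_posSemidef (hρ : ρSA.PosSemidef) (a : Fin dA) :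
    (condUnnorm w ρSA a).PosSemidef := by
  rw [condUnnorm_eq_mul_mul_conjTranspose]
  exact hρ.mul_mul_conjTranspose_same _

theorem sum_condUnnorm (hw : ONFam w) : ∑ a, condUnnorm w ρSA a = ptraceA ρSA := by
  have hcol : ∀ c d, ∑ a, w a d * star (w a c) = if c = d then 1 else 0 := fun c d => by
    simpa [Matrix.mul_apply, Matrix.one_apply, mul_comm] using
      congrFun (congrFun hw.conjTranspose_mul_self c) d
  ext i j
  simp only [Matrix.sum_apply, condUnnorm, ptraceA, Matrix.of_apply]
  rw [Finset.sum_comm]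
  refine Finset.sum_congr rfl fun c _ => ?_
  rw [Finset.sum_comm]
  simp_rw [← Finset.mul_sum, hcol]
  simp

variable (u : ℝ → ℝ) (q : ℝ) (ε : Fin dS → ℝ) (v : Fin dS → Fin dS → ℂ)

theorem prob_mul_optUtil_condState (hρ : ρSA.PosSemidef) (a : Fin dA) :
    prob w ρSA a * optUtil u q ε v (condState w ρSA a) =
      optUtil u q ε v (condUnnorm w ρSA a) := by
  have hpsd := condUnnorm_posSemidef (w := w) hρ a
  simp only [condState, prob]
  rw [← optUtil_real_smul u q ε v (Complex.nonneg_iff.mp hpsd.trace_nonneg).1,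
    hpsd.trace_re_smul_inv_smul]

theorem daemonicUtil_eq_sum_optUtil_condUnnorm (hρ : ρSA.PosSemidef) :
    daemonicUtil u q ε v w ρSA = ∑ a, optUtil u q ε v (condUnnorm w ρSA a) := by
  simp only [daemonicUtil, prob_mul_optUtil_condState u q ε v hρ]

theorem optUtil_ptraceA_le_daemonicUtil (hρ : ρSA.PosSemidef) (hw : ONFam w) :
    optUtil u q ε v (ptraceA ρSA) ≤ daemonicUtil u q ε v w ρSA := by
  rw [daemonicUtil_eq_sum_optUtil_condUnnorm u q ε v hρ, ← sum_condUnnorm hw]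
  exact optUtil_sum_le u q ε v _ _

theorem bddAbove_range_daemonicUtil (hρ : ρSA.PosSemidef) :
    BddAbove (Set.range fun V : Matrix.unitaryGroup (Fin dA) ℂ =>
      daemonicUtil u q ε v (fun a => (V : Matrix (Fin dA) (Fin dA) ℂ) a) ρSA) := by
  have hcont : ∀ a, Continuous fun VU : Matrix.unitaryGroup (Fin dA) ℂ ×
      Matrix.unitaryGroup (Fin dS) ℂ =>
        expUtil u q ε v (condUnnorm (fun b => (VU.1 : Matrix (Fin dA) (Fin dA) ℂ) b) ρSA a)
          VU.2 := by
    intro a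
    exact continuous_expUtil u q ε v ((continuous_condUnnorm ρSA a).comp (by fun_prop))
      (by fun_prop)
  choose B hB using fun a => (isCompact_range (hcont a)).bddAbove
  refine ⟨∑ a, B a, ?_⟩
  rintro _ ⟨V, rfl⟩
  dsimp only
  rw [daemonicUtil_eq_sum_optUtil_condUnnorm u q ε v hρ]
  exact Finset.sum_le_sum fun a _ => ciSup_le fun U => hB a ⟨(V, U), rfl⟩

theorem daemonicGain_nonneg (hρ : ρSA.PosSemidef) : 0 ≤ daemonicGain u q ε v ρSA := by
  rw [daemonicGain, sub_nonneg]
  exact (optUtil_ptraceA_le_daemonicUtil u q ε v hρ onFam_rows_one).trans <|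
    le_ciSup (bddAbove_range_daemonicUtil u q ε v hρ) 1

end Conditioning

theorem stmt7_general {dS dA : ℕ} (u : ℝ → ℝ) (q : ℝ)
    (ε : Fin dS → ℝ)
    (v : Fin dS → Fin dS → ℂ)
    (ρSA : Matrix (Fin dS × Fin dA) (Fin dS × Fin dA) ℂ) (hρSA : IsDensity ρSA)
    (w : Fin dA → Fin dA → ℂ) (hw : ONFam w) :
    optUtil u q ε v (ptraceA ρSA) ≤ daemonicUtil u q ε v w ρSA ∧
    0 ≤ daemonicGain u q ε v ρSA :=
  ⟨optUtil_ptraceA_le_daemonicUtil u q ε v hρSA.1 hw, daemonicGain_nonneg u q ε v hρSA.1⟩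

/-- the daemonic expected utility dominates the optimal expected utility of the
reduced state, `𝓤_{{Π_a}}(ρ_SA) ≥ 𝓤(ρ_S)`; consequently `δ𝓤(ρ_SA) ≥ 0`. -/
theorem stmt7 {dS dA : ℕ} (u : ℝ → ℝ) (q : ℝ)
    (ε : Fin dS → ℝ) (hε : StrictMono ε)
    (v : Fin dS → Fin dS → ℂ) (hv : ONFam v)
    (ρSA : Matrix (Fin dS × Fin dA) (Fin dS × Fin dA) ℂ) (hρSA : IsDensity ρSA)
    (w : Fin dA → Fin dA → ℂ) (hw : ONFam w) :
    optUtil u q ε v (ptraceA ρSA) ≤ daemonicUtil u q ε v w ρSA ∧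
    0 ≤ daemonicGain u q ε v ρSA :=
  stmt7_general u q ε v ρSA hρSA w hw
end Daemonic
end
end

section
/- Let d_S = 2, with ρ_S the density matrix with entries ρ_{11} = p, ρ_{22} = 1 − p, ρ_{12} = c, ρ_{21} = c* in the eigenbasis of H_S, and let X, Y, Z be as determined by the utility u with u(0) = 0. Then for q = 1/2 the optimal expected utility equals 𝓤(ρ_S) = (X − pY)/2 + √(((X − pY)/2)² + |c|² Z²); equivalently, the maximum over all pairs (α, β) ∈ ℂ² with |α|² + |β|² = 1 of |β|²(X − pY) − 2 Re(c α β) Z equals this value. -/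
open Matrix BigOperators Finset Kronecker
open scoped ComplexOrder

noncomputable section

namespace Daemonic

/-!
In the eigenbasis of `H_S` a unitary becomes a `2 × 2` unitary matrix `A`. For `q = 1/2` the
terms with `i = j = k` vanish because `u 0 = 0`, orthogonality of the columns of `A` merges the
two coherence terms, and the expected utility becomes `|β|² (X - pY) - 2 Re(cαβ) Z` with
`(α, β) = (A₀₀, -A₀₁*)`. Conversely every unit vector `(α, β)` is realised by the unitary with
columns `(α, β), (-β*, α*)`, so both sets in the theorem coincide.

With `K = X - pY`, `a = |α|`, `b = |β|` the value is at most
`b² K + 2ab |cZ| = K/2 + ⟪(K/2, |cZ|), (b² - a², 2ab)⟫`, and `(b² - a², 2ab)` is a unit vector,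
so Cauchy–Schwarz bounds it by `K/2 + √((K/2)² + |c|² Z²)`. Equality holds when
`(b² - a², 2ab)` points along `(K/2, |cZ|)`, i.e. `(a, b) = (sin φ, cos φ)` with `2φ` the
argument of `K/2 + i |cZ|`, and the phase of `α` cancels that of `cZ`.
-/

section Eigenbasis

variable {ι : Type*} [Fintype ι]

def basisMatrix (v : ι → ι → ℂ) : Matrix ι ι ℂ := Matrix.of fun i k => v k i

def inBasis (v : ι → ι → ℂ) (M : Matrix ι ι ℂ) : Matrix ι ι ℂ :=
  (basisMatrix v)ᴴ * M * basisMatrix v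

theorem matElem_eq_inBasis (M : Matrix ι ι ℂ) (v : ι → ι → ℂ) (i j : ι) :
    matElem M (v i) (v j) = inBasis v M i j := by
  simp only [matElem, inBasis, basisMatrix, Matrix.mul_apply, Matrix.mulVec, dotProduct,
    Matrix.conjTranspose_apply, Matrix.of_apply, Pi.star_apply, Finset.mul_sum,
    Finset.sum_mul]
  rw [Finset.sum_comm]
  simp only [mul_assoc]

theorem inBasis_conjTranspose (v : ι → ι → ℂ) (M : Matrix ι ι ℂ) :
    inBasis v Mᴴ = (inBasis v M)ᴴ := by
  simp only [inBasis, Matrix.conjTranspose_mul, Matrix.conjTranspose_conjTranspose,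
    Matrix.mul_assoc]

theorem sum_smul_ketbra_eq (R : Matrix ι ι ℂ) (v : ι → ι → ℂ) :
    ∑ a, ∑ b, R a b • ketbra (v a) (v b) = basisMatrix v * R * (basisMatrix v)ᴴ := by
  ext i j
  simp only [ketbra, basisMatrix, Matrix.mul_apply, Matrix.sum_apply, Matrix.smul_apply,
    Matrix.vecMulVec_apply, Matrix.conjTranspose_apply, Matrix.of_apply, Pi.star_apply,
    Finset.sum_mul, smul_eq_mul]
  rw [Finset.sum_comm]
  refine Finset.sum_congr rfl fun a _ => Finset.sum_congr rfl fun b _ => by ring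

variable [DecidableEq ι]

theorem basisMatrix_mem_unitaryGroup {v : ι → ι → ℂ} (hv : ONFam v) :
    basisMatrix v ∈ Matrix.unitaryGroup ι ℂ := by
  rw [Matrix.mem_unitaryGroup_iff']
  ext i j
  simpa [Matrix.mul_apply, basisMatrix, dotProduct, Matrix.one_apply] using hv i j

theorem inBasis_basisMatrix_mul_mul {v : ι → ι → ℂ} (hv : ONFam v) (M : Matrix ι ι ℂ) :
    inBasis v (basisMatrix v * M * (basisMatrix v)ᴴ) = M := by
  have h : (basisMatrix v)ᴴ * basisMatrix v = 1 :=
    Matrix.mem_unitaryGroup_iff'.mp (basisMatrix_mem_unitaryGroup hv)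
  simp only [inBasis, ← Matrix.mul_assoc, h, Matrix.one_mul]
  simp only [Matrix.mul_assoc, h, Matrix.mul_one]

theorem inBasis_mem_unitaryGroup {v : ι → ι → ℂ} (hv : ONFam v) {U : Matrix ι ι ℂ}
    (hU : U ∈ Matrix.unitaryGroup ι ℂ) : inBasis v U ∈ Matrix.unitaryGroup ι ℂ := by
  have hV := basisMatrix_mem_unitaryGroup hv
  rw [inBasis, ← Matrix.star_eq_conjTranspose]
  exact mul_mem (mul_mem (Unitary.star_mem hV) hU) hV

theorem basisMatrix_mul_mul_mem_unitaryGroup {v : ι → ι → ℂ} (hv : ONFam v)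
    {M : Matrix ι ι ℂ} (hM : M ∈ Matrix.unitaryGroup ι ℂ) :
    basisMatrix v * M * (basisMatrix v)ᴴ ∈ Matrix.unitaryGroup ι ℂ := by
  have hV := basisMatrix_mem_unitaryGroup hv
  rw [← Matrix.star_eq_conjTranspose]
  exact mul_mem (mul_mem hV hM) (Unitary.star_mem hV)

end Eigenbasis

theorem expUtil_eq_sum_inBasis {n : ℕ} (u : ℝ → ℝ) (q : ℝ) (ε : Fin n → ℝ)
    (v : Fin n → Fin n → ℂ) (ρ U : Matrix (Fin n) (Fin n) ℂ) :
    expUtil u q ε v ρ U = ∑ i, ∑ j, ∑ k,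
      (inBasis v ρ i j * star (inBasis v U k j) * inBasis v U k i).re *
        u (q * ε i + (1 - q) * ε j - ε k) := by
  simp only [expUtil, matElem_eq_inBasis, inBasis_conjTranspose, Matrix.conjTranspose_apply]

section Qubit

variable {A : Matrix (Fin 2) (Fin 2) ℂ}

theorem normSq_add_normSq_of_mem_unitaryGroup (hA : A ∈ Matrix.unitaryGroup (Fin 2) ℂ) :
    Complex.normSq (A 0 0) + Complex.normSq (A 0 1) = 1 := by
  have h := congrFun (congrFun (Matrix.mem_unitaryGroup_iff.mp hA) 0) 0
  simp only [Matrix.mul_apply, Fin.sum_univ_two, Matrix.star_apply, Matrix.one_apply_eq,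
    Complex.star_def, Complex.mul_conj] at h
  exact_mod_cast h

theorem normSq_apply_one_zero_of_mem_unitaryGroup (hA : A ∈ Matrix.unitaryGroup (Fin 2) ℂ) :
    Complex.normSq (A 1 0) = Complex.normSq (A 0 1) := by
  have h := congrFun (congrFun (Matrix.mem_unitaryGroup_iff'.mp hA) 0) 0
  simp only [Matrix.mul_apply, Fin.sum_univ_two, Matrix.star_apply, Matrix.one_apply_eq,
    Complex.star_def, ← Complex.normSq_eq_conj_mul_self] at h
  have hcol : Complex.normSq (A 0 0) + Complex.normSq (A 1 0) = 1 := by exact_mod_cast h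
  linarith [normSq_add_normSq_of_mem_unitaryGroup hA]

theorem star_apply_one_one_mul_of_mem_unitaryGroup (hA : A ∈ Matrix.unitaryGroup (Fin 2) ℂ) :
    star (A 1 1) * A 1 0 = -(star (A 0 1) * A 0 0) := by
  have h := congrFun (congrFun (Matrix.mem_unitaryGroup_iff'.mp hA) 1) 0
  simp only [Matrix.mul_apply, Fin.sum_univ_two, Matrix.star_apply,
    Matrix.one_apply_ne (show (1 : Fin 2) ≠ 0 by decide)] at h
  linear_combination h

def qubitUnitary (α β : ℂ) : Matrix (Fin 2) (Fin 2) ℂ := !![α, -star β; β, star α]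

theorem qubitUnitary_mem_unitaryGroup {α β : ℂ}
    (h : Complex.normSq α + Complex.normSq β = 1) :
    qubitUnitary α β ∈ Matrix.unitaryGroup (Fin 2) ℂ := by
  have h' : ((Complex.normSq α + Complex.normSq β : ℝ) : ℂ) = 1 := by exact_mod_cast h
  push_cast [Complex.normSq_eq_conj_mul_self] at h'
  rw [Matrix.mem_unitaryGroup_iff', qubitUnitary, Matrix.star_eq_conjTranspose]
  ext i j
  fin_cases i <;> fin_cases j <;>
    simp [Matrix.mul_apply, Fin.sum_univ_two] <;> first | ring1 | linear_combination h'

end Qubit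

theorem inBasis_qubitState {v : Fin 2 → Fin 2 → ℂ} (hv : ONFam v) (p : ℝ) (c : ℂ) :
    inBasis v ((p : ℂ) • ketbra (v 0) (v 0) + c • ketbra (v 0) (v 1) +
      (starRingEnd ℂ c) • ketbra (v 1) (v 0) + ((1 - p : ℝ) : ℂ) • ketbra (v 1) (v 1)) =
      !![(p : ℂ), c; star c, ((1 - p : ℝ) : ℂ)] := by
  rw [← inBasis_basisMatrix_mul_mul hv !![(p : ℂ), c; star c, ((1 - p : ℝ) : ℂ)],
    ← sum_smul_ketbra_eq]
  simp [Fin.sum_univ_two, add_assoc]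

theorem expUtil_half_qubit (u : ℝ → ℝ) (hu0 : u 0 = 0) (ε : Fin 2 → ℝ)
    {v : Fin 2 → Fin 2 → ℂ} (hv : ONFam v) (p : ℝ) (c : ℂ)
    {ρ : Matrix (Fin 2) (Fin 2) ℂ}
    (hρ : inBasis v ρ = !![(p : ℂ), c; star c, ((1 - p : ℝ) : ℂ)])
    {U : Matrix (Fin 2) (Fin 2) ℂ} (hU : U ∈ Matrix.unitaryGroup (Fin 2) ℂ) :
    expUtil u (1 / 2) ε v ρ U =
      Complex.normSq (inBasis v U 0 1) *
          (u (ε 1 - ε 0) - p * (u (ε 1 - ε 0) - u (-(ε 1 - ε 0)))) -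
        2 * (c * inBasis v U 0 0 * -star (inBasis v U 0 1)).re *
          (u ((ε 1 - ε 0) / 2) - u (-((ε 1 - ε 0) / 2))) := by
  have hA := inBasis_mem_unitaryGroup hv hU
  rw [expUtil_eq_sum_inBasis, hρ]
  generalize inBasis v U = A at hA ⊢
  have hdiag (r : ℝ) (z : ℂ) : ((r : ℂ) * star z * z).re = r * Complex.normSq z := by
    rw [Complex.star_def, mul_assoc, ← Complex.normSq_eq_conj_mul_self, ← Complex.ofReal_mul,
      Complex.ofReal_re]
  have hconj (z w : ℂ) : (star c * star z * w).re = (c * star w * z).re := by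
    rw [← Complex.conj_re, map_mul, map_mul, Complex.star_def,
      starRingEnd_self_apply, starRingEnd_self_apply, mul_right_comm]
  have horth : c * star (A 1 1) * A 1 0 = -(c * star (A 0 1) * A 0 0) := by
    linear_combination c * star_apply_one_one_mul_of_mem_unitaryGroup hA
  simp only [Fin.sum_univ_two, Matrix.of_apply, Matrix.cons_val', Matrix.cons_val_zero,
    Matrix.cons_val_one, Matrix.empty_val', Matrix.cons_val_fin_one, hdiag, hconj]
  obtain ⟨Δ, hΔ⟩ : ∃ Δ, ε 1 = ε 0 + Δ := ⟨ε 1 - ε 0, by ring⟩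
  rw [hΔ]
  -- brings every argument of `u` to a normal form among `0`, `±Δ`, `±Δ/2`
  ring_nf
  rw [hu0, horth, Complex.neg_re, normSq_apply_one_zero_of_mem_unitaryGroup hA]
  ring

theorem setOf_expUtil_half_qubit_eq (u : ℝ → ℝ) (hu0 : u 0 = 0) (ε : Fin 2 → ℝ)
    {v : Fin 2 → Fin 2 → ℂ} (hv : ONFam v) (p : ℝ) (c : ℂ)
    {ρ : Matrix (Fin 2) (Fin 2) ℂ}
    (hρ : inBasis v ρ = !![(p : ℂ), c; star c, ((1 - p : ℝ) : ℂ)]) :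
    {x : ℝ | ∃ U ∈ Matrix.unitaryGroup (Fin 2) ℂ, x = expUtil u (1 / 2) ε v ρ U} =
      {x : ℝ | ∃ α β : ℂ, Complex.normSq α + Complex.normSq β = 1 ∧
        x = Complex.normSq β * (u (ε 1 - ε 0) - p * (u (ε 1 - ε 0) - u (-(ε 1 - ε 0)))) -
          2 * (c * α * β).re * (u ((ε 1 - ε 0) / 2) - u (-((ε 1 - ε 0) / 2)))} := by
  ext x
  constructor
  · rintro ⟨U, hU, rfl⟩
    have hrow := normSq_add_normSq_of_mem_unitaryGroup (inBasis_mem_unitaryGroup hv hU)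
    refine ⟨inBasis v U 0 0, -star (inBasis v U 0 1), ?_, ?_⟩
    · rwa [Complex.normSq_neg, Complex.star_def, Complex.normSq_conj]
    · rw [expUtil_half_qubit u hu0 ε hv p c hρ hU, Complex.normSq_neg, Complex.star_def,
        Complex.normSq_conj]
  · rintro ⟨α, β, hαβ, rfl⟩
    have hU := basisMatrix_mul_mul_mem_unitaryGroup hv (qubitUnitary_mem_unitaryGroup hαβ)
    refine ⟨_, hU, ?_⟩
    rw [expUtil_half_qubit u hu0 ε hv p c hρ hU, inBasis_basisMatrix_mul_mul hv]
    simp [qubitUnitary]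

theorem sq_mul_add_two_mul_mul_le {K L a b : ℝ} (hab : a ^ 2 + b ^ 2 = 1) :
    b ^ 2 * K + 2 * a * b * L ≤ K / 2 + √((K / 2) ^ 2 + L ^ 2) := by
  have cauchySchwarz :
      (K / 2 * (b ^ 2 - a ^ 2) + L * (2 * a * b)) ^ 2 ≤ (K / 2) ^ 2 + L ^ 2 := by
    have lagrange :
        (K / 2) ^ 2 + L ^ 2 - (K / 2 * (b ^ 2 - a ^ 2) + L * (2 * a * b)) ^ 2 =
        (K * a * b - L * (b ^ 2 - a ^ 2)) ^ 2 := by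
      linear_combination (-((K / 2) ^ 2 + L ^ 2) * (1 + a ^ 2 + b ^ 2)) * hab
    linarith [sq_nonneg (K * a * b - L * (b ^ 2 - a ^ 2))]
  calc b ^ 2 * K + 2 * a * b * L
        = K / 2 + (K / 2 * (b ^ 2 - a ^ 2) + L * (2 * a * b)) := by
          linear_combination (K / 2) * hab
    _ ≤ K / 2 + √((K / 2) ^ 2 + L ^ 2) := by gcongr; exact Real.le_sqrt_of_sq_le cauchySchwarz

theorem exists_sq_mul_add_two_mul_mul_eq (K L : ℝ) : ∃ a b : ℝ,
    a ^ 2 + b ^ 2 = 1 ∧ b ^ 2 * K + 2 * a * b * L = K / 2 + √((K / 2) ^ 2 + L ^ 2) := by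
  set w : ℂ := ⟨K / 2, L⟩
  have hw : ‖w‖ = √((K / 2) ^ 2 + L ^ 2) := by
    rw [Complex.norm_def, Complex.normSq_mk]; ring_nf
  have hcos := Complex.norm_mul_cos_arg w
  have hsin := Complex.norm_mul_sin_arg w
  set φ := Complex.arg w / 2
  rw [show Complex.arg w = 2 * φ by ring] at hcos hsin
  rw [Real.cos_two_mul'] at hcos
  rw [Real.sin_two_mul] at hsin
  refine ⟨Real.sin φ, Real.cos φ, Real.sin_sq_add_cos_sq φ, ?_⟩
  rw [← hw]
  linear_combination (1 - 2 * Real.cos φ ^ 2) * hcos - 2 * Real.sin φ * Real.cos φ * hsin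
    + ‖w‖ * (2 * Real.cos φ ^ 2 + 1) * Real.sin_sq_add_cos_sq φ

theorem isGreatest_normSq_mul_sub_re_mul (K Z : ℝ) (c : ℂ) :
    IsGreatest {x : ℝ | ∃ α β : ℂ, Complex.normSq α + Complex.normSq β = 1 ∧
        x = Complex.normSq β * K - 2 * (c * α * β).re * Z}
      (K / 2 + √((K / 2) ^ 2 + Complex.normSq c * Z ^ 2)) := by
  set w : ℂ := c * Z
  have hw : Complex.normSq c * Z ^ 2 = ‖w‖ ^ 2 := by
    rw [norm_mul, mul_pow, Complex.sq_norm, Complex.norm_real, Real.norm_eq_abs, sq_abs]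
  have hre (α β : ℂ) : (c * α * β).re * Z = (w * (α * β)).re := by
    rw [← Complex.re_mul_ofReal]; congr 1; ring
  rw [hw]
  constructor
  · obtain ⟨a, b, hab, hval⟩ := exists_sq_mul_add_two_mul_mul_eq K ‖w‖
    have hphase : w * Complex.exp (↑(-Complex.arg w) * Complex.I) = ‖w‖ := by
      nth_rewrite 1 [← Complex.norm_mul_exp_arg_mul_I w]
      rw [mul_assoc, ← Complex.exp_add]
      simp
    refine ⟨-a * Complex.exp (↑(-Complex.arg w) * Complex.I), b, ?_, ?_⟩
    · rw [← Complex.sq_norm, ← Complex.sq_norm, norm_mul, norm_neg,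
        Complex.norm_exp_ofReal_mul_I, Complex.norm_real, Complex.norm_real, Real.norm_eq_abs,
        Real.norm_eq_abs, mul_one,
        sq_abs, sq_abs, hab]
    · have hprod : w * (-a * Complex.exp (↑(-Complex.arg w) * Complex.I) * b) =
          ((-(a * b * ‖w‖) : ℝ) : ℂ) := by
        calc _ = -(a * b : ℂ) * (w * Complex.exp (↑(-Complex.arg w) * Complex.I)) := by ring
          _ = _ := by rw [hphase]; push_cast; ring
      rw [mul_assoc 2, hre, hprod, Complex.ofReal_re, Complex.normSq_ofReal]
      linarith
  · rintro x ⟨α, β, hαβ, rfl⟩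
    rw [← Complex.sq_norm, ← Complex.sq_norm] at hαβ
    have hbound : -(w * (α * β)).re ≤ ‖w‖ * ‖α‖ * ‖β‖ := by
      simpa [mul_assoc] using Complex.re_le_norm (-(w * (α * β)))
    rw [← Complex.sq_norm]
    linarith [sq_mul_add_two_mul_mul_le (K := K) (L := ‖w‖) hαβ, hre α β]

theorem stmt11_general (u : ℝ → ℝ) (hu0 : u 0 = 0)
    (ε : Fin 2 → ℝ)
    (v : Fin 2 → Fin 2 → ℂ) (hv : ONFam v)
    (p : ℝ) (c : ℂ)
    (ρ : Matrix (Fin 2) (Fin 2) ℂ)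
    (hρdef : ρ = (p : ℂ) • ketbra (v 0) (v 0) + c • ketbra (v 0) (v 1) +
      (starRingEnd ℂ c) • ketbra (v 1) (v 0) + ((1 - p : ℝ) : ℂ) • ketbra (v 1) (v 1))
    (X Y Z : ℝ) (hX : X = u (ε 1 - ε 0)) (hY : Y = u (ε 1 - ε 0) - u (-(ε 1 - ε 0)))
    (hZ : Z = u ((ε 1 - ε 0)/2) - u (-((ε 1 - ε 0)/2))) :
    IsGreatest {x : ℝ | ∃ U ∈ Matrix.unitaryGroup (Fin 2) ℂ, x = expUtil u (1/2) ε v ρ U}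
      ((X - p * Y)/2 + Real.sqrt (((X - p * Y)/2)^2 + Complex.normSq c * Z^2)) ∧
    IsGreatest {x : ℝ | ∃ α β : ℂ, Complex.normSq α + Complex.normSq β = 1 ∧
        x = Complex.normSq β * (X - p * Y) - 2 * (c * α * β).re * Z}
      ((X - p * Y)/2 + Real.sqrt (((X - p * Y)/2)^2 + Complex.normSq c * Z^2)) := by
  subst hX hY hZ
  rw [setOf_expUtil_half_qubit_eq u hu0 ε hv p c (hρdef ▸ inBasis_qubitState hv p c)]
  have h := isGreatest_normSq_mul_sub_re_mul
    (u (ε 1 - ε 0) - p * (u (ε 1 - ε 0) - u (-(ε 1 - ε 0))))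
    (u ((ε 1 - ε 0) / 2) - u (-((ε 1 - ε 0) / 2))) c
  exact ⟨h, h⟩

/-- for a qubit and `q = 1/2`, the optimal expected utility equals
`(X - pY)/2 + √(((X - pY)/2)² + |c|² Z²)`, and it equals the maximum over all `(α, β)` with
`|α|² + |β|² = 1` of `|β|²(X - pY) - 2 Re(cαβ) Z`. -/
theorem stmt11 (u : ℝ → ℝ) (hu0 : u 0 = 0)
    (ε : Fin 2 → ℝ) (hε : ε 0 < ε 1)
    (v : Fin 2 → Fin 2 → ℂ) (hv : ONFam v)
    (p : ℝ) (c : ℂ)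
    (ρ : Matrix (Fin 2) (Fin 2) ℂ) (hρ : IsDensity ρ)
    (hρdef : ρ = (p : ℂ) • ketbra (v 0) (v 0) + c • ketbra (v 0) (v 1) +
      (starRingEnd ℂ c) • ketbra (v 1) (v 0) + ((1 - p : ℝ) : ℂ) • ketbra (v 1) (v 1))
    (X Y Z : ℝ) (hX : X = u (ε 1 - ε 0)) (hY : Y = u (ε 1 - ε 0) - u (-(ε 1 - ε 0)))
    (hZ : Z = u ((ε 1 - ε 0)/2) - u (-((ε 1 - ε 0)/2))) :
    IsGreatest {x : ℝ | ∃ U ∈ Matrix.unitaryGroup (Fin 2) ℂ, x = expUtil u (1/2) ε v ρ U}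
      ((X - p * Y)/2 + Real.sqrt (((X - p * Y)/2)^2 + Complex.normSq c * Z^2)) ∧
    IsGreatest {x : ℝ | ∃ α β : ℂ, Complex.normSq α + Complex.normSq β = 1 ∧
        x = Complex.normSq β * (X - p * Y) - 2 * (c * α * β).re * Z}
      ((X - p * Y)/2 + Real.sqrt (((X - p * Y)/2)^2 + Complex.normSq c * Z^2)) :=
  stmt11_general u hu0 ε v hv p c ρ hρdef X Y Z hX hY hZ

end Daemonic
end
end
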